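/- arXiv:math/0503381 — 9 statements merged into one kernel-verified Lean document; each statement's English description precedes it below -/
import Mathlib

section
/- Let 0 < r < α/(2‖A₁‖). Then for all u, v ∈ V with ‖u‖ ≤ r and ‖v‖ ≤ r, and all h_u, h_v ∈ V satisfying B h_u = ℓ − A₁(u,u) and B h_v = ℓ − A₁(v,v), one has ‖h_u − h_v‖ ≤ L·‖u − v‖, where L := 2‖A₁‖r/α < 1. In other words, the map H(v) := B⁻¹(ℓ − A₁(v,v)), restricted to the closed ball B_r of radius r centered at the origin, is a contraction with Lipschitz constant L. -/
open scoped RealInnerProductSpace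

/-- The fixed point map `H(v) = B⁻¹(ℓ − A₁(v,v))` restricted to the closed ball of
radius `r < α/(2‖A₁‖)` is a contraction with Lipschitz constant `L = 2‖A₁‖r/α < 1`. -/
theorem contraction_of_fixed_point_map
    {V : Type*} [NormedAddCommGroup V] [InnerProductSpace ℝ V] [CompleteSpace V]
    (B : V →L[ℝ] V) (α : ℝ) (hα : 0 < α)
    (hB : ∀ v : V, α * ‖v‖ ^ 2 ≤ ⟪B v, v⟫)
    (A₁ : V →L[ℝ] V →L[ℝ] V) (hA₁ : ‖A₁‖ ≠ 0)
    (ℓ : V) (r : ℝ) (hr : 0 < r) (hr' : r < α / (2 * ‖A₁‖)) :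
    2 * ‖A₁‖ * r / α < 1 ∧
    ∀ u v hu hv : V, ‖u‖ ≤ r → ‖v‖ ≤ r →
      B hu = ℓ - A₁ u u → B hv = ℓ - A₁ v v →
      ‖hu - hv‖ ≤ (2 * ‖A₁‖ * r / α) * ‖u - v‖ := by
  have hA : 0 < ‖A₁‖ := lt_of_le_of_ne (norm_nonneg A₁) (Ne.symm hA₁)
  constructor
  · rw [div_lt_one hα]
    have := (lt_div_iff₀ (by positivity : (0:ℝ) < 2 * ‖A₁‖)).mp hr'
    nlinarith
  · intro u v hu hv hur hvr hBu hBv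
    have key : B (hu - hv) = A₁ v v - A₁ u u := by
      rw [map_sub, hBu, hBv]; abel
    have hdecomp : A₁ v v - A₁ u u = A₁ (v - u) v + A₁ u (v - u) := by
      simp only [map_sub, ContinuousLinearMap.sub_apply]; abel
    have hnorm : ‖B (hu - hv)‖ ≤ 2 * ‖A₁‖ * r * ‖u - v‖ := by
      rw [key, hdecomp]
      have h1 : ‖A₁ (v - u) v‖ ≤ ‖A₁‖ * ‖v - u‖ * ‖v‖ :=
        ContinuousLinearMap.le_opNorm₂ A₁ _ _
      have h2 : ‖A₁ u (v - u)‖ ≤ ‖A₁‖ * ‖u‖ * ‖v - u‖ :=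
        ContinuousLinearMap.le_opNorm₂ A₁ _ _
      have hvu : ‖v - u‖ = ‖u - v‖ := norm_sub_rev _ _
      calc ‖A₁ (v - u) v + A₁ u (v - u)‖ ≤ ‖A₁ (v - u) v‖ + ‖A₁ u (v - u)‖ :=
            norm_add_le _ _
        _ ≤ 2 * ‖A₁‖ * r * ‖u - v‖ := by
            rw [hvu] at h1 h2
            have e1 : ‖A₁‖ * ‖u - v‖ * ‖v‖ ≤ ‖A₁‖ * ‖u - v‖ * r :=
              mul_le_mul_of_nonneg_left hvr (by positivity)
            have e2 : ‖A₁‖ * ‖u‖ * ‖u - v‖ ≤ ‖A₁‖ * r * ‖u - v‖ := by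
              have := mul_le_mul_of_nonneg_left hur (le_of_lt hA)
              exact mul_le_mul_of_nonneg_right this (norm_nonneg _)
            nlinarith
    have h1 : α * ‖hu - hv‖ ^ 2 ≤ ‖B (hu - hv)‖ * ‖hu - hv‖ :=
      (hB _).trans (real_inner_le_norm _ _)
    rcases eq_or_lt_of_le (norm_nonneg (hu - hv)) with h0 | h0
    · rw [← h0]; positivity
    · rw [div_mul_eq_mul_div, le_div_iff₀ hα]
      have h2 := h1.trans (mul_le_mul_of_nonneg_right hnorm (norm_nonneg _))
      nlinarith
end

section
/- Let 0 < r < α/‖A₁‖ and suppose ‖ℓ‖ ≤ r(α − ‖A₁‖·r). Then for every v ∈ V with ‖v‖ ≤ r and every h ∈ V with B h = ℓ − A₁(v,v), one has ‖h‖ ≤ r. In other words, the map H(v) := B⁻¹(ℓ − A₁(v,v)) maps the closed ball B_r of radius r centered at the origin into itself. -/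
open scoped RealInnerProductSpace

/-- The fixed point map `H(v) = B⁻¹(ℓ − A₁(v,v))` maps the closed ball of radius `r`
into itself, provided `0 < r < α/‖A₁‖` and `‖ℓ‖ ≤ r(α − ‖A₁‖ r)`. -/
theorem fixed_point_map_maps_ball_into_itself
    {V : Type*} [NormedAddCommGroup V] [InnerProductSpace ℝ V] [CompleteSpace V]
    (B : V →L[ℝ] V) (α : ℝ) (hα : 0 < α)
    (hB : ∀ v : V, α * ‖v‖ ^ 2 ≤ ⟪B v, v⟫)
    (A₁ : V →L[ℝ] V →L[ℝ] V) (hA₁ : ‖A₁‖ ≠ 0)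
    (ℓ : V) (r : ℝ) (hr : 0 < r) (hr' : r < α / ‖A₁‖)
    (hℓ : ‖ℓ‖ ≤ r * (α - ‖A₁‖ * r)) :
    ∀ v h : V, ‖v‖ ≤ r → B h = ℓ - A₁ v v → ‖h‖ ≤ r := by
  intro v h hv hBh
  have hA₁pos : (0:ℝ) < ‖A₁‖ := (norm_nonneg A₁).lt_of_ne (Ne.symm hA₁)
  -- α ‖h‖ ≤ ‖B h‖
  have key : α * ‖h‖ ≤ ‖B h‖ := by
    rcases eq_or_ne h 0 with rfl | hh
    · simp
    · have hhpos : (0:ℝ) < ‖h‖ := norm_pos_iff.mpr hh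
      have h1 : α * ‖h‖ ^ 2 ≤ ⟪B h, h⟫ := hB h
      have h2 : ⟪B h, h⟫ ≤ ‖B h‖ * ‖h‖ := real_inner_le_norm _ _
      have := h1.trans h2
      nlinarith
  have hBhnorm : ‖B h‖ ≤ ‖ℓ‖ + ‖A₁‖ * r ^ 2 := by
    rw [hBh]
    have h3 : ‖A₁ v v‖ ≤ ‖A₁‖ * ‖v‖ * ‖v‖ := (A₁ v).le_opNorm v |>.trans
      (by gcongr; exact A₁.le_opNorm v)
    calc ‖ℓ - A₁ v v‖ ≤ ‖ℓ‖ + ‖A₁ v v‖ := norm_sub_le _ _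
      _ ≤ ‖ℓ‖ + ‖A₁‖ * r ^ 2 := by nlinarith [h3, norm_nonneg v, mul_le_mul hv hv (norm_nonneg v) hr.le, hA₁pos.le]
  have : α * ‖h‖ ≤ r * α := by nlinarith
  nlinarith
end

section
/- The operator G = T*∘B∘T : H → H is a bounded linear operator; its kernel equals ker T; its range equals the range of T*, which is a closed subspace of H equal to (ker T)⊥, so that H decomposes orthogonally as H = ker T ⊕ Ran G. Moreover G is boundedly invertible on its range: G maps (ker T)⊥ bijectively onto itself and there exists a constant c > 0 with ‖G x‖ ≥ c‖x‖ for all x ∈ (ker T)⊥. -/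
open scoped RealInnerProductSpace

/-! For `G = T* B T` one has `⟪G x, x⟫ = ⟪B (T x), T x⟫ ≥ α‖T x‖²`. This gives `ker G = ker T`,
and, combined with the bound `‖x‖ ≤ C‖T x‖` on `(ker T)ᗮ` supplied by the open mapping theorem,
the lower bound `‖G x‖ ≥ (α / C²)‖x‖` there. Since `B` (Lax–Milgram) and `T` are onto,
`Ran G = Ran T*`; the open mapping theorem also makes `T*` bounded below, so `Ran T*` is closed
and therefore equals `(ker T)ᗮ`. -/

open Function
open scoped InnerProductSpace

theorem LinearMap.bijOn_range_of_isCompl_ker {R M M₂ : Type*} [Ring R] [AddCommGroup M]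
    [AddCommGroup M₂] [Module R M] [Module R M₂] {f : M →ₗ[R] M₂} {p : Submodule R M}
    (h : IsCompl p f.ker) : Set.BijOn f p f.range := by
  refine ⟨fun x _ => mem_range_self f x, disjoint_ker_iff_injOn.mp h.disjoint, ?_⟩
  rintro _ ⟨x, rfl⟩
  obtain ⟨y, hy, z, hz, rfl⟩ := Submodule.mem_sup.mp (h.sup_eq_top ▸ Submodule.mem_top (x := x))
  exact ⟨y, hy, by simp [mem_ker.mp hz]⟩

theorem ContinuousLinearMap.surjective_of_coercive {V : Type*} [NormedAddCommGroup V]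
    [InnerProductSpace ℝ V] [CompleteSpace V] (B : V →L[ℝ] V) {α : ℝ} (hα : 0 < α)
    (hB : ∀ v : V, α * ‖v‖ ^ 2 ≤ ⟪B v, v⟫) : Surjective B := by
  have hcoercive : IsCoercive (innerSL ℝ ∘L B) :=
    ⟨α, hα, fun v => by change α * ‖v‖ * ‖v‖ ≤ ⟪B v, v⟫; simpa [sq, mul_assoc] using hB v⟩
  have hsharp : InnerProductSpace.continuousLinearMapOfBilin (innerSL ℝ ∘L B) = B :=
    ext fun v => ext_inner_right ℝ fun w =>
      InnerProductSpace.continuousLinearMapOfBilin_apply _ v w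
  exact LinearMap.range_eq_top.mp (hsharp ▸ hcoercive.range_eq_top)

namespace ContinuousLinearMap

section SurjectiveAdjoint

variable {𝕜 E F : Type*} [RCLike 𝕜] [NormedAddCommGroup E] [InnerProductSpace 𝕜 E]
  [CompleteSpace E] [NormedAddCommGroup F] [InnerProductSpace 𝕜 F] [CompleteSpace F]
  {T : E →L[𝕜] F}

theorem exists_norm_le_mul_norm_apply_of_mem_orthogonal_ker (hT : Surjective T) :
    ∃ C > 0, ∀ x ∈ T.kerᗮ, ‖x‖ ≤ C * ‖T x‖ := by
  obtain ⟨C, hC, hpre⟩ := T.exists_preimage_norm_le hT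
  refine ⟨C, hC, fun x hx => ?_⟩
  obtain ⟨y, hy, hy_le⟩ := hpre (T x)
  -- `x` is the orthogonal projection of `y` onto `(ker T)ᗮ`
  have hpyth := norm_add_sq_eq_norm_sq_add_norm_sq_of_inner_eq_zero x (y - x)
    (Submodule.inner_left_of_mem_orthogonal (LinearMap.sub_mem_ker_iff.mpr hy) hx)
  rw [add_sub_cancel] at hpyth
  have hxy : ‖x‖ ≤ ‖y‖ := (mul_self_le_mul_self_iff (norm_nonneg x) (norm_nonneg y)).mpr
    (hpyth ▸ le_add_of_nonneg_right (mul_self_nonneg _))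
  exact hxy.trans hy_le

theorem exists_norm_le_mul_norm_adjoint_apply (hT : Surjective T) :
    ∃ C > 0, ∀ v, ‖v‖ ≤ C * ‖adjoint T v‖ := by
  obtain ⟨C, hC, hpre⟩ := T.exists_preimage_norm_le hT
  refine ⟨C, hC, fun v => ?_⟩
  obtain ⟨x, rfl, hx⟩ := hpre v
  rcases (norm_nonneg (T x)).eq_or_lt with h0 | hpos
  · rw [← h0]; positivity
  refine le_of_mul_le_mul_right ?_ hpos
  calc ‖T x‖ * ‖T x‖ = RCLike.re ⟪x, adjoint T (T x)⟫_𝕜 := by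
        rw [adjoint_inner_right, inner_self_eq_norm_mul_norm]
    _ ≤ ‖x‖ * ‖adjoint T (T x)‖ := re_inner_le_norm _ _
    _ ≤ C * ‖T x‖ * ‖adjoint T (T x)‖ := by gcongr
    _ = C * ‖adjoint T (T x)‖ * ‖T x‖ := by ring

theorem antilipschitz_adjoint_of_surjective (hT : Surjective T) :
    ∃ K, AntilipschitzWith K (adjoint T) := by
  obtain ⟨C, hC, hbound⟩ := exists_norm_le_mul_norm_adjoint_apply hT
  exact ⟨C.toNNReal, (adjoint T).antilipschitz_of_bound fun v => by
    simpa [Real.coe_toNNReal _ hC.le] using hbound v⟩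

theorem isClosed_range_adjoint_of_surjective (hT : Surjective T) :
    IsClosed ((adjoint T).range : Set E) := by
  obtain ⟨K, hK⟩ := antilipschitz_adjoint_of_surjective hT
  exact hK.isClosed_range (adjoint T).uniformContinuous

theorem range_adjoint_eq_orthogonal_ker_of_surjective (hT : Surjective T) :
    (adjoint T).range = T.kerᗮ := by
  obtain ⟨K, hK⟩ := antilipschitz_adjoint_of_surjective hT
  rw [orthogonal_ker, closed_range_of_antilipschitz hK]

end SurjectiveAdjoint

section Galerkin

variable {V H : Type*} [NormedAddCommGroup V] [InnerProductSpace ℝ V] [CompleteSpace V]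
  [NormedAddCommGroup H] [InnerProductSpace ℝ H] [CompleteSpace H]
  {B : V →L[ℝ] V} {α : ℝ} {T : H →L[ℝ] V}

theorem inner_adjoint_comp_comp_apply_self (x : H) :
    ⟪(adjoint T ∘L B ∘L T) x, x⟫ = ⟪B (T x), T x⟫ :=
  adjoint_inner_left T x (B (T x))

theorem ker_adjoint_comp_comp_of_coercive (hα : 0 < α) (hB : ∀ v : V, α * ‖v‖ ^ 2 ≤ ⟪B v, v⟫) :
    (adjoint T ∘L B ∘L T).ker = T.ker := by
  refine le_antisymm (fun x hx => ?_) (fun x hx => by simp_all)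
  have hGx : (adjoint T ∘L B ∘L T) x = 0 := hx
  have hcoercive : α * ‖T x‖ ^ 2 ≤ 0 := by
    simpa [← inner_adjoint_comp_comp_apply_self, hGx] using hB (T x)
  rw [LinearMap.mem_ker, coe_coe]
  by_contra hTx
  linarith [mul_pos hα (pow_pos (norm_pos_iff.mpr hTx) 2)]

theorem range_adjoint_comp_comp_of_surjective (hB : Surjective B) (hT : Surjective T) :
    (adjoint T ∘L B ∘L T).range = (adjoint T).range :=
  LinearMap.range_comp_of_range_eq_top _ (LinearMap.range_eq_top.mpr (hB.comp hT))

theorem exists_mul_norm_le_norm_adjoint_comp_comp_apply (hα : 0 < α)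
    (hB : ∀ v : V, α * ‖v‖ ^ 2 ≤ ⟪B v, v⟫) (hT : Surjective T) :
    ∃ c > 0, ∀ x ∈ T.kerᗮ, c * ‖x‖ ≤ ‖(adjoint T ∘L B ∘L T) x‖ := by
  obtain ⟨C, hC, hbound⟩ := exists_norm_le_mul_norm_apply_of_mem_orthogonal_ker hT
  refine ⟨α / C ^ 2, by positivity, fun x hx => ?_⟩
  rcases (norm_nonneg x).eq_or_lt with h0 | hpos
  · rw [← h0, mul_zero]
    exact norm_nonneg _
  have hTx : ‖x‖ / C ≤ ‖T x‖ := by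
    rw [div_le_iff₀ hC]
    linarith [hbound x hx]
  refine le_of_mul_le_mul_right ?_ hpos
  calc α / C ^ 2 * ‖x‖ * ‖x‖ = α * (‖x‖ / C) ^ 2 := by ring
    _ ≤ α * ‖T x‖ ^ 2 := by gcongr
    _ ≤ ⟪(adjoint T ∘L B ∘L T) x, x⟫ := by rw [inner_adjoint_comp_comp_apply_self]; exact hB _
    _ ≤ ‖(adjoint T ∘L B ∘L T) x‖ * ‖x‖ := real_inner_le_norm _ _

end Galerkin

end ContinuousLinearMap

/-- Properties of the discretized operator `G = T* ∘ B ∘ T`: its kernel is `ker T`,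
its range is `Ran T* = (ker T)ᗮ`, which is closed, `H` decomposes orthogonally as
`ker T ⊕ Ran G`, and `G` is boundedly invertible on its range. -/
theorem discretized_operator_properties
    {V H : Type*} [NormedAddCommGroup V] [InnerProductSpace ℝ V] [CompleteSpace V]
    [NormedAddCommGroup H] [InnerProductSpace ℝ H] [CompleteSpace H]
    (B : V →L[ℝ] V) (α : ℝ) (hα : 0 < α)
    (hB : ∀ v : V, α * ‖v‖ ^ 2 ≤ ⟪B v, v⟫)
    (T : H →L[ℝ] V) (hT : Function.Surjective T)
    (G : H →L[ℝ] H) (hG : G = (ContinuousLinearMap.adjoint T).comp (B.comp T)) :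
    LinearMap.ker (G : H →ₗ[ℝ] H) = LinearMap.ker (T : H →ₗ[ℝ] V) ∧
    LinearMap.range (G : H →ₗ[ℝ] H) = LinearMap.range (ContinuousLinearMap.adjoint T : V →ₗ[ℝ] H) ∧
    IsClosed ((LinearMap.range (ContinuousLinearMap.adjoint T : V →ₗ[ℝ] H) : Submodule ℝ H) : Set H) ∧
    (LinearMap.range (ContinuousLinearMap.adjoint T : V →ₗ[ℝ] H) : Submodule ℝ H) = (LinearMap.ker (T : H →ₗ[ℝ] V))ᗮ ∧
    LinearMap.ker (T : H →ₗ[ℝ] V) ⊔ LinearMap.range (G : H →ₗ[ℝ] H) = ⊤ ∧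
    (∀ x ∈ (LinearMap.ker (T : H →ₗ[ℝ] V))ᗮ, G x ∈ (LinearMap.ker (T : H →ₗ[ℝ] V))ᗮ) ∧
    Set.BijOn G ((LinearMap.ker (T : H →ₗ[ℝ] V))ᗮ : Set H) ((LinearMap.ker (T : H →ₗ[ℝ] V))ᗮ : Set H) ∧
    ∃ c : ℝ, 0 < c ∧ ∀ x ∈ (LinearMap.ker (T : H →ₗ[ℝ] V))ᗮ, c * ‖x‖ ≤ ‖G x‖ := by
  subst hG
  have hker := ContinuousLinearMap.ker_adjoint_comp_comp_of_coercive (T := T) hα hB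
  have hrange := ContinuousLinearMap.range_adjoint_comp_comp_of_surjective
    (B.surjective_of_coercive hα hB) hT
  have hrange_adjoint := ContinuousLinearMap.range_adjoint_eq_orthogonal_ker_of_surjective hT
  have hrange_orth := hrange.trans hrange_adjoint
  obtain ⟨c, hc, hbound⟩ :=
    ContinuousLinearMap.exists_mul_norm_le_norm_adjoint_comp_comp_apply hα hB hT
  refine ⟨hker, hrange, ContinuousLinearMap.isClosed_range_adjoint_of_surjective hT,
    hrange_adjoint, hrange_orth ▸ Submodule.sup_orthogonal_of_hasOrthogonalProjection,
    fun x _ => hrange_orth ▸ LinearMap.mem_range_self _ x, ?_, c, hc, hbound⟩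
  have hcompl : IsCompl (T.ker)ᗮ (ContinuousLinearMap.adjoint T ∘L B ∘L T).ker :=
    hker ▸ T.ker.isCompl_orthogonal.symm
  have hbij := LinearMap.bijOn_range_of_isCompl_ker hcompl
  rwa [hrange_orth] at hbij
end

section
/- The operator G*G : H → H (G* the Hilbert-space adjoint of G) is self-adjoint and positive, and it is boundedly invertible on the range of G: G*G maps (ker T)⊥ bijectively onto itself and there exists a constant c′ > 0 such that ⟪(G*G)x, x⟫ ≥ c′‖x‖² for all x ∈ (ker T)⊥. -/
/-!
Since `G = T* B T` vanishes on `ker T`, the range of `G*G` lies in `(ker T)ᗮ`. By the open mapping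
theorem the surjection `T` is bounded below on `(ker T)ᗮ`, so the coercivity of `B` passes to `G`
there; hence `‖G x‖ ≥ c ‖x‖` and `⟪G*G x, x⟫ = ‖G x‖² ≥ c² ‖x‖²` on `(ker T)ᗮ`. Lax–Milgram for the
restriction of `G*G` to the closed subspace `(ker T)ᗮ` then gives the bijection.
-/

open scoped RealInnerProductSpace
open ContinuousLinearMap

section OrthogonalKer

variable {𝕜 E F : Type*} [RCLike 𝕜] [NormedAddCommGroup E] [InnerProductSpace 𝕜 E]
  [CompleteSpace E] [NormedAddCommGroup F] [CompleteSpace F]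

theorem ContinuousLinearMap.adjoint_apply_mem_orthogonal_of_le_ker [InnerProductSpace 𝕜 F]
    (A : E →L[𝕜] F) {K : Submodule 𝕜 E} (hK : K ≤ A.ker) (y : F) : adjoint A y ∈ Kᗮ :=
  Submodule.orthogonal_le hK (A.orthogonal_ker ▸ (adjoint A).range.le_topologicalClosure ⟨y, rfl⟩)

theorem ContinuousLinearMap.exists_norm_le_mul_norm_apply_of_mem_orthogonal_ker_s5
    [NormedSpace 𝕜 F] (T : E →L[𝕜] F) (hT : Function.Surjective T) :
    ∃ C > 0, ∀ x ∈ T.kerᗮ, ‖x‖ ≤ C * ‖T x‖ := by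
  obtain ⟨C, hC, hpre⟩ := T.exists_preimage_norm_le hT
  refine ⟨C, hC, fun x hx => ?_⟩
  obtain ⟨z, hz, hzC⟩ := hpre (T x)
  have hzx : z - x ∈ T.ker := by simp [hz]
  have hpyth : ‖z‖ * ‖z‖ = ‖x‖ * ‖x‖ + ‖z - x‖ * ‖z - x‖ := by
    simpa using norm_add_sq_eq_norm_sq_add_norm_sq_of_inner_eq_zero x (z - x)
      (Submodule.inner_left_of_mem_orthogonal hzx hx)
  calc ‖x‖ ≤ ‖z‖ := mul_self_le_mul_self_iff (norm_nonneg _) (norm_nonneg _) |>.mpr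
        (by rw [hpyth]; exact le_add_of_nonneg_right (mul_self_nonneg _))
    _ ≤ C * ‖T x‖ := hzC

end OrthogonalKer

section Coercive

variable {E : Type*} [NormedAddCommGroup E] [InnerProductSpace ℝ E]

theorem mul_norm_le_norm_of_mul_norm_sq_le_inner {c : ℝ} {x y : E}
    (h : c * ‖x‖ ^ 2 ≤ ⟪y, x⟫) : c * ‖x‖ ≤ ‖y‖ := by
  rcases (norm_nonneg x).eq_or_lt with hx | hx
  · rw [← hx, mul_zero]
    exact norm_nonneg y
  · refine le_of_mul_le_mul_right ?_ hx
    calc c * ‖x‖ * ‖x‖ = c * ‖x‖ ^ 2 := by ring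
      _ ≤ ⟪y, x⟫ := h
      _ ≤ ‖y‖ * ‖x‖ := real_inner_le_norm y x

theorem ContinuousLinearMap.mul_norm_sq_le_inner_adjoint_comp_self [CompleteSpace E]
    (A : E →L[ℝ] E) {c : ℝ} (hc : 0 ≤ c) {x : E} (h : c * ‖x‖ ^ 2 ≤ ⟪A x, x⟫) :
    c ^ 2 * ‖x‖ ^ 2 ≤ ⟪(adjoint A ∘L A) x, x⟫ := by
  have hAx : c * ‖x‖ ≤ ‖A x‖ := mul_norm_le_norm_of_mul_norm_sq_le_inner h
  calc c ^ 2 * ‖x‖ ^ 2 = (c * ‖x‖) ^ 2 := by ring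
    _ ≤ ‖A x‖ ^ 2 := pow_le_pow_left₀ (by positivity) hAx 2
    _ = ⟪(adjoint A ∘L A) x, x⟫ := A.apply_norm_sq_eq_inner_adjoint_left x

theorem ContinuousLinearMap.bijective_of_mul_norm_sq_le_inner [CompleteSpace E]
    (S : E →L[ℝ] E) {c : ℝ} (hc : 0 < c) (h : ∀ x, c * ‖x‖ ^ 2 ≤ ⟪S x, x⟫) :
    Function.Bijective S := by
  have hcoer : IsCoercive ((innerSL ℝ).comp S) :=
    ⟨c, hc, fun u => by simpa [mul_assoc, sq] using h u⟩
  have heq : ⇑hcoer.continuousLinearEquivOfBilin = S :=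
    funext fun u => ext_inner_right ℝ (hcoer.continuousLinearEquivOfBilin_apply u)
  exact heq ▸ hcoer.continuousLinearEquivOfBilin.bijective

theorem ContinuousLinearMap.bijOn_of_mul_norm_sq_le_inner (S : E →L[ℝ] E)
    (K : Submodule ℝ E) [CompleteSpace K] (hS : ∀ x ∈ K, S x ∈ K) {c : ℝ} (hc : 0 < c)
    (h : ∀ x ∈ K, c * ‖x‖ ^ 2 ≤ ⟪S x, x⟫) : Set.BijOn S K K := by
  have hbij : Function.Bijective (S.restrict hS) :=
    (S.restrict hS).bijective_of_mul_norm_sq_le_inner hc fun x => h x x.2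
  have hmaps : Set.MapsTo S K K := hS
  exact ⟨hmaps, hmaps.restrict_inj.mp hbij.1, hmaps.restrict_surjective_iff.mp hbij.2⟩

end Coercive

/-- The operator `G*G` is self-adjoint and positive, and it is boundedly invertible
on the range of `G`, i.e. on `(ker T)ᗮ`: it maps `(ker T)ᗮ` bijectively onto itself
and is uniformly coercive there. -/
theorem normal_operator_selfadjoint_positive_invertible
    {V H : Type*} [NormedAddCommGroup V] [InnerProductSpace ℝ V] [CompleteSpace V]
    [NormedAddCommGroup H] [InnerProductSpace ℝ H] [CompleteSpace H]
    (B : V →L[ℝ] V) (α : ℝ) (hα : 0 < α)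
    (hB : ∀ v : V, α * ‖v‖ ^ 2 ≤ ⟪B v, v⟫)
    (T : H →L[ℝ] V) (hT : Function.Surjective T)
    (G : H →L[ℝ] H) (hG : G = (ContinuousLinearMap.adjoint T).comp (B.comp T))
    (G₂ : H →L[ℝ] H) (hG₂ : G₂ = (ContinuousLinearMap.adjoint G).comp G) :
    IsSelfAdjoint G₂ ∧
    (∀ x : H, 0 ≤ ⟪G₂ x, x⟫) ∧
    (∀ x ∈ (LinearMap.ker (T : H →ₗ[ℝ] V))ᗮ, G₂ x ∈ (LinearMap.ker (T : H →ₗ[ℝ] V))ᗮ) ∧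
    Set.BijOn G₂ ((LinearMap.ker (T : H →ₗ[ℝ] V))ᗮ : Set H) ((LinearMap.ker (T : H →ₗ[ℝ] V))ᗮ : Set H) ∧
    ∃ c' : ℝ, 0 < c' ∧ ∀ x ∈ (LinearMap.ker (T : H →ₗ[ℝ] V))ᗮ, c' * ‖x‖ ^ 2 ≤ ⟪G₂ x, x⟫ := by
  obtain ⟨C, hC, hTK⟩ := T.exists_norm_le_mul_norm_apply_of_mem_orthogonal_ker_s5 hT
  have hc : 0 < α / C ^ 2 := by positivity
  have hGK : ∀ x ∈ T.kerᗮ, α / C ^ 2 * ‖x‖ ^ 2 ≤ ⟪G x, x⟫ := fun x hx =>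
    calc α / C ^ 2 * ‖x‖ ^ 2 ≤ α / C ^ 2 * (C * ‖T x‖) ^ 2 := by gcongr; exact hTK x hx
      _ = α * ‖T x‖ ^ 2 := by field_simp
      _ ≤ ⟪B (T x), T x⟫ := hB (T x)
      _ = ⟪G x, x⟫ := by rw [hG, comp_apply, comp_apply, adjoint_inner_left]
  have hG₂K : ∀ x ∈ T.kerᗮ, (α / C ^ 2) ^ 2 * ‖x‖ ^ 2 ≤ ⟪G₂ x, x⟫ := fun x hx =>
    hG₂ ▸ G.mul_norm_sq_le_inner_adjoint_comp_self hc.le (hGK x hx)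
  have hGker : T.ker ≤ G.ker := fun x hx => by
    simp only [LinearMap.mem_ker, coe_coe] at hx ⊢
    simp [hG, hx]
  have hG₂range : ∀ x, G₂ x ∈ T.kerᗮ := fun x =>
    hG₂ ▸ G.adjoint_apply_mem_orthogonal_of_le_ker hGker (G x)
  have hG₂pos : G₂.IsPositive := hG₂ ▸ isPositive_adjoint_comp_self G
  exact ⟨hG₂pos.isSelfAdjoint, hG₂pos.inner_nonneg_left, fun x _ => hG₂range x,
    G₂.bijOn_of_mul_norm_sq_le_inner _ (fun x _ => hG₂range x) (by positivity) hG₂K,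
    _, by positivity, hG₂K⟩
end

section
/- Let f ∈ V, assume G ≠ 0, let 0 < α* < 2/‖G*G‖, and let ū ∈ H be any solution of the discretized equation G ū = T* f (such solutions exist since T* f lies in the range of G). Then P ū = α*·Σ_{n=0}^∞ (Id − α*·G*G)ⁿ (G*(T* f)), the series converging in H. -/
/-! On `K = (ker T)ᗮ` the operator `G = T* B T` is bounded below, by the open mapping theorem for
`T` and the coercivity of `B`; hence `S = Id - αs G*G` maps `K` into itself as a contraction as
soon as `0 < αs ‖G‖² < 2`. Since `G* T* f = G*G (P ubar)`, the `n`-th term of the series is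
`Sⁿ p - Sⁿ⁺¹ p` with `p = P ubar ∈ K`, so the series telescopes to `p`. -/

open scoped RealInnerProductSpace

open ContinuousLinearMap Set

theorem hasSum_sub_succ_of_summable {E : Type*} [AddCommGroup E] [TopologicalSpace E]
    [IsTopologicalAddGroup E] {u : ℕ → E} (hu : Summable u) :
    HasSum (fun n ↦ u n - u (n + 1)) (u 0) := by
  simpa using hu.hasSum.sub ((hasSum_nat_add_iff' 1).mpr hu.hasSum)

section Contraction

variable {R E : Type*} [Semiring R] [NormedAddCommGroup E] [Module R E]
  {S : E →L[R] E} {s : Set E} {r : ℝ}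

theorem mapsTo_pow_of_mapsTo (hs : MapsTo S s s) (n : ℕ) : MapsTo (S ^ n) s s := by
  induction n with
  | zero => exact mapsTo_id s
  | succ n ih => rw [pow_succ']; exact hs.comp ih

theorem norm_pow_apply_le_of_mapsTo (hr : 0 ≤ r) (hs : MapsTo S s s)
    (hS : ∀ x ∈ s, ‖S x‖ ≤ r * ‖x‖) (n : ℕ) {x : E} (hx : x ∈ s) :
    ‖(S ^ n) x‖ ≤ r ^ n * ‖x‖ := by
  induction n with
  | zero => simp
  | succ n ih =>
    calc ‖(S ^ (n + 1)) x‖ = ‖S ((S ^ n) x)‖ := by rw [pow_succ', mul_apply_eq_comp]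
      _ ≤ r * ‖(S ^ n) x‖ := hS _ (mapsTo_pow_of_mapsTo hs n hx)
      _ ≤ r ^ (n + 1) * ‖x‖ := by rw [pow_succ', mul_assoc]; gcongr

theorem hasSum_pow_apply_sub_of_mapsTo [CompleteSpace E] (hr0 : 0 ≤ r) (hr1 : r < 1)
    (hs : MapsTo S s s) (hS : ∀ x ∈ s, ‖S x‖ ≤ r * ‖x‖) {p : E} (hp : p ∈ s) :
    HasSum (fun n ↦ (S ^ n) (p - S p)) p := by
  have hsum : Summable fun n ↦ (S ^ n) p :=
    .of_norm_bounded ((summable_geometric_of_lt_one hr0 hr1).mul_right ‖p‖)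
      fun n ↦ norm_pow_apply_le_of_mapsTo hr0 hs hS n hp
  simpa [pow_succ, mul_apply_eq_comp] using hasSum_sub_succ_of_summable hsum

end Contraction

theorem mul_norm_le_norm_of_mul_sq_le_inner {E : Type*} [NormedAddCommGroup E]
    [InnerProductSpace ℝ E] {γ : ℝ} {x y : E} (h : γ * ‖x‖ ^ 2 ≤ ⟪y, x⟫) : γ * ‖x‖ ≤ ‖y‖ := by
  rcases (norm_nonneg x).eq_or_lt with hx | hx
  · simp [← hx]
  · refine le_of_mul_le_mul_right ?_ hx
    calc γ * ‖x‖ * ‖x‖ = γ * ‖x‖ ^ 2 := by ring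
      _ ≤ ‖y‖ * ‖x‖ := h.trans (real_inner_le_norm y x)

theorem norm_le_of_sub_mem_of_mem_orthogonal {E : Type*} [NormedAddCommGroup E]
    [InnerProductSpace ℝ E] {K : Submodule ℝ E} {x y : E} (hxy : y - x ∈ K) (hx : x ∈ Kᗮ) :
    ‖x‖ ≤ ‖y‖ := by
  have h := norm_add_sq_eq_norm_sq_add_norm_sq_real (K.inner_right_of_mem_orthogonal hxy hx)
  rw [sub_add_cancel] at h
  nlinarith [norm_nonneg x, norm_nonneg y, mul_self_nonneg ‖y - x‖]

section Hilbert

variable {E F : Type*} [NormedAddCommGroup E] [InnerProductSpace ℝ E] [CompleteSpace E]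
  [NormedAddCommGroup F] [InnerProductSpace ℝ F] [CompleteSpace F]

theorem exists_pos_norm_le_mul_norm_apply_of_surjective (T : E →L[ℝ] F)
    (hT : Function.Surjective T) :
    ∃ C > 0, ∀ x ∈ (LinearMap.ker (T : E →ₗ[ℝ] F))ᗮ, ‖x‖ ≤ C * ‖T x‖ := by
  obtain ⟨C, hC, hpre⟩ := T.exists_preimage_norm_le hT
  refine ⟨C, hC, fun x hx ↦ ?_⟩
  obtain ⟨y, hy, hyC⟩ := hpre (T x)
  exact (norm_le_of_sub_mem_of_mem_orthogonal (by simp [hy]) hx).trans hyC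

theorem exists_pos_mul_norm_le_norm_adjoint_comp_apply_of_coercive (B : F →L[ℝ] F) {α : ℝ}
    (hα : 0 < α) (hB : ∀ v, α * ‖v‖ ^ 2 ≤ ⟪B v, v⟫) (T : E →L[ℝ] F)
    (hT : Function.Surjective T) :
    ∃ γ > 0, ∀ x ∈ (LinearMap.ker (T : E →ₗ[ℝ] F))ᗮ, γ * ‖x‖ ≤ ‖(adjoint T ∘L (B ∘L T)) x‖ := by
  obtain ⟨C, hC, hTx⟩ := exists_pos_norm_le_mul_norm_apply_of_surjective T hT
  refine ⟨α / C ^ 2, by positivity, fun x hx ↦ mul_norm_le_norm_of_mul_sq_le_inner ?_⟩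
  calc α / C ^ 2 * ‖x‖ ^ 2 ≤ α / C ^ 2 * (C * ‖T x‖) ^ 2 := by gcongr; exact hTx x hx
    _ = α * ‖T x‖ ^ 2 := by field_simp
    _ ≤ ⟪(adjoint T ∘L (B ∘L T)) x, x⟫ := by simpa [adjoint_inner_left] using hB (T x)

theorem norm_sub_smul_adjoint_comp_self_apply_le (G : E →L[ℝ] F) {c γ : ℝ} (hc : 0 ≤ c)
    (hcG : c * ‖G‖ ^ 2 ≤ 2) (hγ : 0 ≤ γ) {x : E} (hx : γ * ‖x‖ ≤ ‖G x‖) :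
    ‖x - c • (adjoint G ∘L G) x‖ ≤ √(1 - c * (2 - c * ‖G‖ ^ 2) * γ ^ 2) * ‖x‖ := by
  have hGx : ‖(adjoint G ∘L G) x‖ ^ 2 ≤ ‖G‖ ^ 2 * ‖G x‖ ^ 2 := by
    rw [← mul_pow]
    gcongr
    simpa [LinearIsometryEquiv.norm_map] using (adjoint G).le_opNorm (G x)
  have hsq : ‖x - c • (adjoint G ∘L G) x‖ ^ 2 ≤ (1 - c * (2 - c * ‖G‖ ^ 2) * γ ^ 2) * ‖x‖ ^ 2 :=
    calc ‖x - c • (adjoint G ∘L G) x‖ ^ 2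
        = ‖x‖ ^ 2 - 2 * c * ‖G x‖ ^ 2 + c ^ 2 * ‖(adjoint G ∘L G) x‖ ^ 2 := by
          rw [norm_sub_sq_real, norm_smul, real_inner_smul_right, comp_apply,
            adjoint_inner_right, real_inner_self_eq_norm_sq, Real.norm_eq_abs, mul_pow, sq_abs]
          ring
      _ ≤ ‖x‖ ^ 2 - c * (2 - c * ‖G‖ ^ 2) * ‖G x‖ ^ 2 := by
          nlinarith [mul_le_mul_of_nonneg_left hGx (sq_nonneg c)]
      _ ≤ ‖x‖ ^ 2 - c * (2 - c * ‖G‖ ^ 2) * (γ * ‖x‖) ^ 2 := by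
          gcongr
      _ = _ := by ring
  calc ‖x - c • (adjoint G ∘L G) x‖ = √(‖x - c • (adjoint G ∘L G) x‖ ^ 2) :=
        (Real.sqrt_sq (norm_nonneg _)).symm
    _ ≤ √((1 - c * (2 - c * ‖G‖ ^ 2) * γ ^ 2) * ‖x‖ ^ 2) := Real.sqrt_le_sqrt hsq
    _ = _ := by rw [Real.sqrt_mul' _ (sq_nonneg _), Real.sqrt_sq (norm_nonneg _)]

end Hilbert

theorem adjoint_apply_mem_orthogonal_ker {𝕜 E F : Type*} [RCLike 𝕜] [NormedAddCommGroup E]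
    [InnerProductSpace 𝕜 E] [CompleteSpace E] [NormedAddCommGroup F] [InnerProductSpace 𝕜 F]
    [CompleteSpace F] (G : E →L[𝕜] F) (y : F) :
    adjoint G y ∈ (LinearMap.ker (G : E →ₗ[𝕜] F))ᗮ :=
  G.orthogonal_ker ▸ Submodule.le_topologicalClosure _ ⟨y, rfl⟩

theorem projection_of_solution_as_neumann_series_general
    {V H : Type*} [NormedAddCommGroup V] [InnerProductSpace ℝ V] [CompleteSpace V]
    [NormedAddCommGroup H] [InnerProductSpace ℝ H] [CompleteSpace H]
    (B : V →L[ℝ] V) (α : ℝ) (hα : 0 < α)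
    (hB : ∀ v : V, α * ‖v‖ ^ 2 ≤ ⟪B v, v⟫)
    (T : H →L[ℝ] V) (hT : Function.Surjective T)
    (G : H →L[ℝ] H) (hG : G = (ContinuousLinearMap.adjoint T).comp (B.comp T))
    (G₂ : H →L[ℝ] H) (hG₂ : G₂ = (ContinuousLinearMap.adjoint G).comp G)
    (P : H →L[ℝ] H)
    (hP : ∀ x : H, P x ∈ (LinearMap.ker (T : H →ₗ[ℝ] V))ᗮ ∧ x - P x ∈ LinearMap.ker (T : H →ₗ[ℝ] V))
    (αs : ℝ) (hαs : 0 < αs) (hαs' : αs < 2 / ‖G₂‖)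
    (f : V) (ubar : H) (hubar : G ubar = ContinuousLinearMap.adjoint T f) :
    HasSum
      (fun n : ℕ => αs • (((ContinuousLinearMap.id ℝ H - αs • G₂) ^ n)
        (ContinuousLinearMap.adjoint G (ContinuousLinearMap.adjoint T f))))
      (P ubar) := by
  set K := (LinearMap.ker (T : H →ₗ[ℝ] V))ᗮ
  set S := ContinuousLinearMap.id ℝ H - αs • G₂
  obtain ⟨γ, hγ, hGK⟩ := exists_pos_mul_norm_le_norm_adjoint_comp_apply_of_coercive B hα hB T hT
  rw [← hG] at hGK
  have hker : LinearMap.ker (T : H →ₗ[ℝ] V) ≤ LinearMap.ker (G : H →ₗ[ℝ] H) :=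
    fun x (hx : T x = 0) ↦ by simp [hG, hx]
  have hαsG : αs * ‖G‖ ^ 2 < 2 := by
    rw [hG₂, norm_adjoint_comp_self, ← sq] at hαs'
    rcases (sq_nonneg ‖G‖).eq_or_lt with h | h
    · simp [← h]
    · exact (lt_div_iff₀ h).mp hαs'
  set r := √(1 - αs * (2 - αs * ‖G‖ ^ 2) * γ ^ 2)
  have hr : r < 1 := by
    rw [Real.sqrt_lt' one_pos, one_pow, sub_lt_self_iff]
    have : 0 < 2 - αs * ‖G‖ ^ 2 := by linarith
    positivity
  have hG₂K : ∀ x, G₂ x ∈ K := fun x ↦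
    Submodule.orthogonal_le hker (hG₂ ▸ adjoint_apply_mem_orthogonal_ker G (G x))
  have hSK : MapsTo S K K := fun x hx ↦ K.sub_mem hx (K.smul_mem _ (hG₂K x))
  have hS : ∀ x ∈ K, ‖S x‖ ≤ r * ‖x‖ := fun x hx ↦ by
    simpa [S, hG₂] using
      norm_sub_smul_adjoint_comp_self_apply_le G hαs.le hαsG.le hγ.le (hGK x hx)
  have hGP : G ubar = G (P ubar) := sub_eq_zero.mp (by simpa using hker (hP ubar).2)
  have hw : adjoint G (adjoint T f) = G₂ (P ubar) := by rw [← hubar, hGP, hG₂, comp_apply]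
  convert hasSum_pow_apply_sub_of_mapsTo (Real.sqrt_nonneg _) hr hSK hS (hP ubar).1 using 2 with n
  rw [hw, ← map_smul]
  simp [S]

/-- For any solution `ubar` of the discretized equation `G ubar = T* f`, the projection
`P ubar` onto `(ker T)ᗮ = Ran G` is given by the convergent Neumann series
`α* Σ (Id − α* G*G)ⁿ (G* T* f)`. -/
theorem projection_of_solution_as_neumann_series
    {V H : Type*} [NormedAddCommGroup V] [InnerProductSpace ℝ V] [CompleteSpace V]
    [NormedAddCommGroup H] [InnerProductSpace ℝ H] [CompleteSpace H]
    (B : V →L[ℝ] V) (α : ℝ) (hα : 0 < α)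
    (hB : ∀ v : V, α * ‖v‖ ^ 2 ≤ ⟪B v, v⟫)
    (T : H →L[ℝ] V) (hT : Function.Surjective T)
    (G : H →L[ℝ] H) (hG : G = (ContinuousLinearMap.adjoint T).comp (B.comp T))
    (G₂ : H →L[ℝ] H) (hG₂ : G₂ = (ContinuousLinearMap.adjoint G).comp G)
    (P : H →L[ℝ] H)
    (hP : ∀ x : H, P x ∈ (LinearMap.ker (T : H →ₗ[ℝ] V))ᗮ ∧ x - P x ∈ LinearMap.ker (T : H →ₗ[ℝ] V))
    (hGne : G ≠ 0)
    (αs : ℝ) (hαs : 0 < αs) (hαs' : αs < 2 / ‖G₂‖)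
    (f : V) (ubar : H) (hubar : G ubar = ContinuousLinearMap.adjoint T f) :
    HasSum
      (fun n : ℕ => αs • (((ContinuousLinearMap.id ℝ H - αs • G₂) ^ n)
        (ContinuousLinearMap.adjoint G (ContinuousLinearMap.adjoint T f))))
      (P ubar) :=
  projection_of_solution_as_neumann_series_general B α hα hB T hT G hG G₂ hG₂ P hP αs hαs hαs' f
    ubar hubar
end

section
/- Let f ∈ V and let ū ∈ H satisfy G ū = T* f. Then T ū = T(P ū) and B(T ū) = f; that is, u := T(P ū) = F* D_V⁻¹ 𝐏 ū is the unique solution in V of the elliptic operator equation B u = f. -/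
open scoped RealInnerProductSpace

/-!
Surjectivity of `T` makes `T*` injective (its kernel is `(range T)ᗮ = 0`), so `T* (B (T ubar)) = T* f`
forces `B (T ubar) = f`. Since `ubar - P ubar ∈ ker T`, replacing `ubar` by `P ubar` does not change
`T ubar`, and coercivity makes `B` injective, which gives uniqueness.
-/

theorem ContinuousLinearMap.injective_of_coercive {V : Type*} [NormedAddCommGroup V]
    [InnerProductSpace ℝ V] (B : V →L[ℝ] V) {α : ℝ} (hα : 0 < α)
    (hB : ∀ v : V, α * ‖v‖ ^ 2 ≤ ⟪B v, v⟫) : Function.Injective B := by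
  refine (injective_iff_map_eq_zero B).mpr fun v hv => ?_
  have hv_sq : α * ‖v‖ ^ 2 ≤ 0 := by simpa [hv] using hB v
  have : ‖v‖ ^ 2 = 0 := le_antisymm (nonpos_of_mul_nonpos_right hv_sq hα) (sq_nonneg _)
  simpa using this

theorem ContinuousLinearMap.adjoint_injective_of_surjective {𝕜 E F : Type*} [RCLike 𝕜]
    [NormedAddCommGroup E] [InnerProductSpace 𝕜 E] [CompleteSpace E]
    [NormedAddCommGroup F] [InnerProductSpace 𝕜 F] [CompleteSpace F]
    (T : E →L[𝕜] F) (hT : Function.Surjective T) :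
    Function.Injective (ContinuousLinearMap.adjoint T) := by
  have hker : (ContinuousLinearMap.adjoint T).ker = ⊥ := by
    rw [← T.orthogonal_range, LinearMap.range_eq_top.mpr hT, Submodule.top_orthogonal_eq_bot]
  simpa using LinearMap.ker_eq_bot.mp hker

/-- If `ubar` solves the discretized equation `G ubar = T* f`, then `T ubar = T (P ubar)` and
`u := T (P ubar)` is the unique solution in `V` of the elliptic equation `B u = f`. -/
theorem recovery_of_continuous_solution_from_discrete
    {V H : Type*} [NormedAddCommGroup V] [InnerProductSpace ℝ V] [CompleteSpace V]
    [NormedAddCommGroup H] [InnerProductSpace ℝ H] [CompleteSpace H]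
    (B : V →L[ℝ] V) (α : ℝ) (hα : 0 < α)
    (hB : ∀ v : V, α * ‖v‖ ^ 2 ≤ ⟪B v, v⟫)
    (T : H →L[ℝ] V) (hT : Function.Surjective T)
    (G : H →L[ℝ] H) (hG : G = (ContinuousLinearMap.adjoint T).comp (B.comp T))
    (P : H →L[ℝ] H)
    (hP : ∀ x : H, P x ∈ (LinearMap.ker (T : H →ₗ[ℝ] V))ᗮ ∧ x - P x ∈ LinearMap.ker (T : H →ₗ[ℝ] V))
    (f : V) (ubar : H) (hubar : G ubar = ContinuousLinearMap.adjoint T f) :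
    T ubar = T (P ubar) ∧ B (T (P ubar)) = f ∧ ∀ w : V, B w = f → w = T (P ubar) := by
  have hTP : T ubar = T (P ubar) := LinearMap.sub_mem_ker_iff.mp (hP ubar).2
  have hsolves : B (T ubar) = f :=
    T.adjoint_injective_of_surjective hT (by simpa [hG] using hubar)
  rw [← hTP]
  exact ⟨rfl, hsolves, fun w hw => B.injective_of_coercive hα hB (hw.trans hsolves.symm)⟩
end

section
/- Suppose 0 < r < c/(2‖T‖³‖A₁‖). Then for all u, v ∈ (ker T)⊥ with ‖u‖ ≤ r and ‖v‖ ≤ r, and all h_u, h_v ∈ (ker T)⊥ satisfying G h_u = l̄ − G₁(u) and G h_v = l̄ − G₁(v), one has ‖h_u − h_v‖ ≤ L·‖u − v‖, where L := 2 r ‖T‖³ ‖A₁‖ / c < 1. In other words, the map 𝐇(v) := (G|_{Ran G})⁻¹(l̄ − G₁(v)), restricted to the ball 𝐁_r = {u ∈ Ran G : ‖u‖ ≤ r}, is a contraction with Lipschitz constant L. -/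
open scoped RealInnerProductSpace

/-!
Subtracting the two defining equations gives `G (h_u - h_v) = G₁ v - G₁ u`. Since `A₁` is
bilinear, `A₁(x, x) - A₁(y, y) = A₁(x - y, x) + A₁(y, x - y)`, so on the ball of radius `r` the
map `G₁ = T* ∘ A₁(T ·, T ·)` is Lipschitz with constant `2 r ‖T*‖ ‖T‖² ‖A₁‖ = 2 r ‖T‖³ ‖A₁‖`.
The lower bound `c ‖x‖ ≤ ‖G x‖` on `(ker T)ᗮ`, which contains `h_u - h_v`, divides this by `c`.
-/

lemma mul_lt_of_lt_div_of_nonneg {r c K : ℝ} (hc : 0 < c) (hK : 0 ≤ K) (hr : r < c / K) :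
    r * K < c := by
  rcases hK.eq_or_lt with rfl | hK
  · simpa using hc
  · exact (lt_div_iff₀ hK).1 hr

namespace ContinuousLinearMap

variable {𝕜 E F G : Type*} [NontriviallyNormedField 𝕜]
  [NormedAddCommGroup E] [NormedSpace 𝕜 E] [NormedAddCommGroup F] [NormedSpace 𝕜 F]
  [NormedAddCommGroup G] [NormedSpace 𝕜 G]

lemma apply_self_sub_apply_self (A : E →L[𝕜] E →L[𝕜] F) (x y : E) :
    A x x - A y y = A (x - y) x + A y (x - y) := by
  simp only [map_sub, sub_apply]
  abel

lemma norm_apply_self_sub_apply_self_le (A : E →L[𝕜] E →L[𝕜] F) (x y : E) :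
    ‖A x x - A y y‖ ≤ ‖A‖ * (‖x‖ + ‖y‖) * ‖x - y‖ :=
  calc ‖A x x - A y y‖
      ≤ ‖A (x - y) x‖ + ‖A y (x - y)‖ := by
        rw [apply_self_sub_apply_self]; exact norm_add_le _ _
    _ ≤ ‖A‖ * ‖x - y‖ * ‖x‖ + ‖A‖ * ‖y‖ * ‖x - y‖ :=
        add_le_add (A.le_opNorm₂ _ _) (A.le_opNorm₂ _ _)
    _ = ‖A‖ * (‖x‖ + ‖y‖) * ‖x - y‖ := by ring

lemma norm_comp_quadratic_sub_le (S : F →L[𝕜] G) (A : F →L[𝕜] F →L[𝕜] F) (T : E →L[𝕜] F)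
    {r : ℝ} {u v : E} (hu : ‖u‖ ≤ r) (hv : ‖v‖ ≤ r) :
    ‖S (A (T u) (T u)) - S (A (T v) (T v))‖ ≤ 2 * r * ‖S‖ * ‖T‖ ^ 2 * ‖A‖ * ‖u - v‖ := by
  have hTu : ‖T u‖ ≤ ‖T‖ * r := T.le_of_opNorm_le_of_le le_rfl hu
  have hTv : ‖T v‖ ≤ ‖T‖ * r := T.le_of_opNorm_le_of_le le_rfl hv
  have hTuv : ‖T u - T v‖ ≤ ‖T‖ * ‖u - v‖ := by rw [← map_sub]; exact T.le_opNorm _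
  have hr : 0 ≤ r := (norm_nonneg u).trans hu
  calc ‖S (A (T u) (T u)) - S (A (T v) (T v))‖
      ≤ ‖S‖ * (‖A‖ * (‖T u‖ + ‖T v‖) * ‖T u - T v‖) := by
        rw [← map_sub]
        exact S.le_of_opNorm_le_of_le le_rfl (A.norm_apply_self_sub_apply_self_le _ _)
    _ ≤ ‖S‖ * (‖A‖ * (‖T‖ * r + ‖T‖ * r) * (‖T‖ * ‖u - v‖)) := by
        gcongr
    _ = 2 * r * ‖S‖ * ‖T‖ ^ 2 * ‖A‖ * ‖u - v‖ := by ring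

end ContinuousLinearMap

lemma mul_norm_sub_le_of_mul_norm_le_norm {E F : Type*} [NormedAddCommGroup E] [NormedSpace ℝ E]
    [NormedAddCommGroup F] [NormedSpace ℝ F] {G : E →L[ℝ] F} {K : Submodule ℝ E} {c : ℝ}
    (hcG : ∀ x ∈ K, c * ‖x‖ ≤ ‖G x‖) {x y : E} (hx : x ∈ K) (hy : y ∈ K) :
    c * ‖x - y‖ ≤ ‖G x - G y‖ := by
  simpa only [map_sub] using hcG (x - y) (K.sub_mem hx hy)

theorem discrete_fixed_point_map_contraction_general
    {V H : Type*} [NormedAddCommGroup V] [InnerProductSpace ℝ V] [CompleteSpace V]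
    [NormedAddCommGroup H] [InnerProductSpace ℝ H] [CompleteSpace H]
    (T : H →L[ℝ] V)
    (G : H →L[ℝ] H)
    (c : ℝ) (hc : 0 < c) (hcG : ∀ x ∈ (LinearMap.ker (T : H →ₗ[ℝ] V))ᗮ, c * ‖x‖ ≤ ‖G x‖)
    (A₁ : V →L[ℝ] V →L[ℝ] V)
    (G₁ : H → H) (hG₁ : ∀ x : H, G₁ x = ContinuousLinearMap.adjoint T (A₁ (T x) (T x)))
    (lbar : H)
    (r : ℝ) (hr' : r < c / (2 * ‖T‖ ^ 3 * ‖A₁‖)) :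
    2 * r * ‖T‖ ^ 3 * ‖A₁‖ / c < 1 ∧
    ∀ u v hu hv : H,
      u ∈ (LinearMap.ker (T : H →ₗ[ℝ] V))ᗮ → v ∈ (LinearMap.ker (T : H →ₗ[ℝ] V))ᗮ →
      ‖u‖ ≤ r → ‖v‖ ≤ r →
      hu ∈ (LinearMap.ker (T : H →ₗ[ℝ] V))ᗮ → hv ∈ (LinearMap.ker (T : H →ₗ[ℝ] V))ᗮ →
      G hu = lbar - G₁ u → G hv = lbar - G₁ v →
      ‖hu - hv‖ ≤ (2 * r * ‖T‖ ^ 3 * ‖A₁‖ / c) * ‖u - v‖ := by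
  have hrc : r * (2 * ‖T‖ ^ 3 * ‖A₁‖) < c :=
    mul_lt_of_lt_div_of_nonneg hc (by positivity) hr'
  refine ⟨(div_lt_one hc).2 (by linarith), ?_⟩
  intro u v hu hv _ _ hur hvr hu_mem hv_mem hGu hGv
  have hG₁_lip : ‖G₁ v - G₁ u‖ ≤ 2 * r * ‖T‖ ^ 3 * ‖A₁‖ * ‖u - v‖ := by
    have := (ContinuousLinearMap.adjoint T).norm_comp_quadratic_sub_le A₁ T hvr hur
    rw [LinearIsometryEquiv.norm_map, norm_sub_rev v u] at this
    rw [hG₁, hG₁]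
    linarith
  rw [div_mul_eq_mul_div, le_div_iff₀ hc, mul_comm]
  calc c * ‖hu - hv‖ ≤ ‖G hu - G hv‖ := mul_norm_sub_le_of_mul_norm_le_norm hcG hu_mem hv_mem
    _ = ‖G₁ v - G₁ u‖ := by rw [hGu, hGv, sub_sub_sub_cancel_left]
    _ ≤ 2 * r * ‖T‖ ^ 3 * ‖A₁‖ * ‖u - v‖ := hG₁_lip

/-- The discrete fixed point map `𝐇(v) = (G|_{Ran G})⁻¹(l̄ − G₁(v))` restricted to the
ball of radius `r < c/(2‖T‖³‖A₁‖)` in `Ran G = (ker T)ᗮ` is a contraction with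
Lipschitz constant `L = 2r‖T‖³‖A₁‖/c < 1`. -/
theorem discrete_fixed_point_map_contraction
    {V H : Type*} [NormedAddCommGroup V] [InnerProductSpace ℝ V] [CompleteSpace V]
    [NormedAddCommGroup H] [InnerProductSpace ℝ H] [CompleteSpace H]
    (B : V →L[ℝ] V) (α : ℝ) (hα : 0 < α)
    (hB : ∀ v : V, α * ‖v‖ ^ 2 ≤ ⟪B v, v⟫)
    (T : H →L[ℝ] V) (hT : Function.Surjective T)
    (G : H →L[ℝ] H) (hG : G = (ContinuousLinearMap.adjoint T).comp (B.comp T))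
    (c : ℝ) (hc : 0 < c) (hcG : ∀ x ∈ (LinearMap.ker (T : H →ₗ[ℝ] V))ᗮ, c * ‖x‖ ≤ ‖G x‖)
    (A₁ : V →L[ℝ] V →L[ℝ] V) (hA₁ : ‖A₁‖ ≠ 0)
    (G₁ : H → H) (hG₁ : ∀ x : H, G₁ x = ContinuousLinearMap.adjoint T (A₁ (T x) (T x)))
    (lbar : H) (hlbar : lbar ∈ LinearMap.range (ContinuousLinearMap.adjoint T : V →ₗ[ℝ] H))
    (r : ℝ) (hr : 0 < r) (hr' : r < c / (2 * ‖T‖ ^ 3 * ‖A₁‖)) :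
    2 * r * ‖T‖ ^ 3 * ‖A₁‖ / c < 1 ∧
    ∀ u v hu hv : H,
      u ∈ (LinearMap.ker (T : H →ₗ[ℝ] V))ᗮ → v ∈ (LinearMap.ker (T : H →ₗ[ℝ] V))ᗮ →
      ‖u‖ ≤ r → ‖v‖ ≤ r →
      hu ∈ (LinearMap.ker (T : H →ₗ[ℝ] V))ᗮ → hv ∈ (LinearMap.ker (T : H →ₗ[ℝ] V))ᗮ →
      G hu = lbar - G₁ u → G hv = lbar - G₁ v →
      ‖hu - hv‖ ≤ (2 * r * ‖T‖ ^ 3 * ‖A₁‖ / c) * ‖u - v‖ :=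
  discrete_fixed_point_map_contraction_general T G c hc hcG A₁ G₁ hG₁ lbar r hr'
end

section
/- Suppose 0 < r < c/(‖T‖³‖A₁‖) and ‖l̄‖ ≤ r·(c − ‖A₁‖·‖T‖³·r). Then for every v ∈ (ker T)⊥ with ‖v‖ ≤ r and every h ∈ (ker T)⊥ with G h = l̄ − G₁(v), one has ‖h‖ ≤ r. In other words, the map 𝐇(v) := (G|_{Ran G})⁻¹(l̄ − G₁(v)) maps the ball 𝐁_r = {u ∈ Ran G : ‖u‖ ≤ r} into itself. -/
open scoped RealInnerProductSpace

theorem ContinuousLinearMap.norm_apply_bilin_diag_le {𝕜 E F K : Type*} [NontriviallyNormedField 𝕜]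
    [SeminormedAddCommGroup E] [NormedSpace 𝕜 E] [SeminormedAddCommGroup F] [NormedSpace 𝕜 F]
    [SeminormedAddCommGroup K] [NormedSpace 𝕜 K]
    (S : F →L[𝕜] K) (A : F →L[𝕜] F →L[𝕜] F) (T : E →L[𝕜] F) (x : E) :
    ‖S (A (T x) (T x))‖ ≤ ‖S‖ * ‖A‖ * (‖T‖ * ‖x‖) ^ 2 := by
  have hTx : ‖T x‖ ≤ ‖T‖ * ‖x‖ := T.le_opNorm x
  calc ‖S (A (T x) (T x))‖ ≤ ‖S‖ * ‖A (T x) (T x)‖ := S.le_opNorm _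
    _ ≤ ‖S‖ * (‖A‖ * ‖T x‖ * ‖T x‖) := by gcongr; exact A.le_opNorm₂ _ _
    _ ≤ ‖S‖ * (‖A‖ * (‖T‖ * ‖x‖) * (‖T‖ * ‖x‖)) := by gcongr
    _ = ‖S‖ * ‖A‖ * (‖T‖ * ‖x‖) ^ 2 := by ring

theorem discrete_fixed_point_map_maps_ball_into_itself_general
    {V H : Type*} [NormedAddCommGroup V] [InnerProductSpace ℝ V] [CompleteSpace V]
    [NormedAddCommGroup H] [InnerProductSpace ℝ H] [CompleteSpace H]
    (T : H →L[ℝ] V)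
    (G : H →L[ℝ] H)
    (c : ℝ) (hc : 0 < c) (hcG : ∀ x ∈ (LinearMap.ker (T : H →ₗ[ℝ] V))ᗮ, c * ‖x‖ ≤ ‖G x‖)
    (A₁ : V →L[ℝ] V →L[ℝ] V)
    (G₁ : H → H) (hG₁ : ∀ x : H, G₁ x = ContinuousLinearMap.adjoint T (A₁ (T x) (T x)))
    (lbar : H)
    (r : ℝ)
    (hl : ‖lbar‖ ≤ r * (c - ‖A₁‖ * ‖T‖ ^ 3 * r)) :
    ∀ v : H, v ∈ (LinearMap.ker (T : H →ₗ[ℝ] V))ᗮ → ‖v‖ ≤ r →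
      ∀ h : H, h ∈ (LinearMap.ker (T : H →ₗ[ℝ] V))ᗮ → G h = lbar - G₁ v → ‖h‖ ≤ r := by
  intro v _ hvr h hh hGh
  have hG₁v : ‖G₁ v‖ ≤ ‖A₁‖ * ‖T‖ ^ 3 * r ^ 2 := by
    have hr : 0 ≤ r := (norm_nonneg v).trans hvr
    calc ‖G₁ v‖ ≤ ‖ContinuousLinearMap.adjoint T‖ * ‖A₁‖ * (‖T‖ * ‖v‖) ^ 2 := by
          rw [hG₁]; exact (ContinuousLinearMap.adjoint T).norm_apply_bilin_diag_le A₁ T v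
      _ ≤ ‖T‖ * ‖A₁‖ * (‖T‖ * r) ^ 2 := by
          rw [ContinuousLinearMap.adjoint.norm_map]; gcongr
      _ = ‖A₁‖ * ‖T‖ ^ 3 * r ^ 2 := by ring
  refine le_of_mul_le_mul_left ?_ hc
  calc c * ‖h‖ ≤ ‖G h‖ := hcG h hh
    _ = ‖lbar - G₁ v‖ := by rw [hGh]
    _ ≤ ‖lbar‖ + ‖G₁ v‖ := norm_sub_le _ _
    _ ≤ r * (c - ‖A₁‖ * ‖T‖ ^ 3 * r) + ‖A₁‖ * ‖T‖ ^ 3 * r ^ 2 := add_le_add hl hG₁v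
    _ = c * r := by ring

/-- The discrete fixed point map `𝐇(v) = (G|_{Ran G})⁻¹(l̄ − G₁(v))` maps the ball of
radius `r` in `Ran G = (ker T)ᗮ` into itself, provided `0 < r < c/(‖T‖³‖A₁‖)` and
`‖l̄‖ ≤ r(c − ‖A₁‖‖T‖³ r)`. -/
theorem discrete_fixed_point_map_maps_ball_into_itself
    {V H : Type*} [NormedAddCommGroup V] [InnerProductSpace ℝ V] [CompleteSpace V]
    [NormedAddCommGroup H] [InnerProductSpace ℝ H] [CompleteSpace H]
    (B : V →L[ℝ] V) (α : ℝ) (hα : 0 < α)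
    (hB : ∀ v : V, α * ‖v‖ ^ 2 ≤ ⟪B v, v⟫)
    (T : H →L[ℝ] V) (hT : Function.Surjective T)
    (G : H →L[ℝ] H) (hG : G = (ContinuousLinearMap.adjoint T).comp (B.comp T))
    (c : ℝ) (hc : 0 < c) (hcG : ∀ x ∈ (LinearMap.ker (T : H →ₗ[ℝ] V))ᗮ, c * ‖x‖ ≤ ‖G x‖)
    (A₁ : V →L[ℝ] V →L[ℝ] V) (hA₁ : ‖A₁‖ ≠ 0)
    (G₁ : H → H) (hG₁ : ∀ x : H, G₁ x = ContinuousLinearMap.adjoint T (A₁ (T x) (T x)))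
    (lbar : H) (hlbar : lbar ∈ LinearMap.range ((ContinuousLinearMap.adjoint T : V →L[ℝ] H) : V →ₗ[ℝ] H))
    (r : ℝ) (hr : 0 < r) (hr' : r < c / (‖T‖ ^ 3 * ‖A₁‖))
    (hl : ‖lbar‖ ≤ r * (c - ‖A₁‖ * ‖T‖ ^ 3 * r)) :
    ∀ v : H, v ∈ (LinearMap.ker (T : H →ₗ[ℝ] V))ᗮ → ‖v‖ ≤ r →
      ∀ h : H, h ∈ (LinearMap.ker (T : H →ₗ[ℝ] V))ᗮ → G h = lbar - G₁ v → ‖h‖ ≤ r :=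
  discrete_fixed_point_map_maps_ball_into_itself_general T G c hc hcG A₁ G₁ hG₁ lbar r hl
end

section
/- Suppose ‖l̄‖ < c²/(4‖T‖³‖A₁‖). Then there exists r* with 0 < r* < c/(2‖T‖³‖A₁‖) such that there is exactly one ū ∈ (ker T)⊥ with ‖ū‖ ≤ r* and G ū + G₁(ū) = l̄; that is, the discrete nonlinear problem 𝐀 ū + 𝐀₁(ū) = 𝐥 has a unique solution in the ball 𝐁_{r*} = {u ∈ Ran G : ‖u‖ ≤ r*}. -/
/-!
On `K = (ker T)ᗮ` the operator `G = T* B T` is bounded below by `c`, and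
`⟪G x, x⟫ = ⟪B (T x), T x⟫ ≥ α ‖T x‖² > 0` for `0 ≠ x ∈ K`; hence its range is closed with
trivial orthogonal complement, and `G` is a bijection of `K`. The equation `G u + G₁ u = l̄`
becomes the fixed-point problem `u = G⁻¹ (l̄ - G₁ u)`. Since `G₁` is quadratic,
`c ‖G⁻¹ (l̄ - G₁ u) - G⁻¹ (l̄ - G₁ v)‖ ≤ ‖T‖³ ‖A₁‖ (‖u‖ + ‖v‖) ‖u - v‖`, so on a ball of radius
`r < c / (2 ‖T‖³ ‖A₁‖)` that is mapped into itself this is a contraction, and Banach's fixed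
point theorem gives existence and uniqueness.
-/

open scoped RealInnerProductSpace
open scoped InnerProduct

theorem exists_radius_of_four_mul_lt_sq {L c k : ℝ} (hL : 0 ≤ L) (hc : 0 < c) (hk : 0 < k)
    (h : 4 * k * L < c ^ 2) : ∃ r, 0 < r ∧ 2 * k * r < c ∧ L + k * r ^ 2 ≤ c * r := by
  -- the midpoint of `2 L / c` and `c / (2 k)`, at both of which `k r² - c r + L ≤ 0`
  refine ⟨L / c + c / (4 * k), by positivity, ?_, ?_⟩
  · field_simp
    nlinarith
  · field_simp
    nlinarith [mul_nonneg hL hk.le]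

section QuadraticPerturbation

variable {E : Type*} [NormedAddCommGroup E]

theorem mul_norm_sub_le_of_eq_sub {S : E →+ E} {c k r : ℝ} (hcS : ∀ x, c * ‖x‖ ≤ ‖S x‖)
    {Q : E → E} (hk : 0 ≤ k) (hQ : ∀ x y, ‖Q x - Q y‖ ≤ k * (‖x‖ + ‖y‖) * ‖x - y‖)
    {l u v x y : E} (hu : ‖u‖ ≤ r) (hv : ‖v‖ ≤ r) (hx : S x = l - Q u) (hy : S y = l - Q v) :
    c * ‖x - y‖ ≤ 2 * k * r * ‖u - v‖ :=
  calc c * ‖x - y‖ ≤ ‖S (x - y)‖ := hcS _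
    _ = ‖Q u - Q v‖ := by rw [map_sub, hx, hy, sub_sub_sub_cancel_left, norm_sub_rev]
    _ ≤ k * (‖u‖ + ‖v‖) * ‖u - v‖ := hQ u v
    _ ≤ k * (2 * r) * ‖u - v‖ := by gcongr; linarith
    _ = 2 * k * r * ‖u - v‖ := by ring

theorem existsUnique_add_eq_of_quadratic [CompleteSpace E] (S : E →+ E)
    (hS : Function.Surjective S) {c : ℝ} (hc : 0 < c) (hcS : ∀ x, c * ‖x‖ ≤ ‖S x‖) (Q : E → E)
    {k : ℝ} (hQ0 : Q 0 = 0) (hQ : ∀ x y, ‖Q x - Q y‖ ≤ k * (‖x‖ + ‖y‖) * ‖x - y‖) (l : E)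
    (hl : ‖l‖ < c ^ 2 / (4 * k)) :
    ∃ r, 0 < r ∧ r < c / (2 * k) ∧ ∃! u, ‖u‖ ≤ r ∧ S u + Q u = l := by
  have hk : 0 < k := by
    have := (div_pos_iff_of_pos_left (by positivity)).1 ((norm_nonneg l).trans_lt hl)
    linarith
  obtain ⟨r, hr, hrc, hrl⟩ := exists_radius_of_four_mul_lt_sq (norm_nonneg l) hc hk
    (by rwa [lt_div_iff₀ (by positivity), mul_comm] at hl)
  have hsol : ∀ u, S u + Q u = l ↔ S u = l - Q u := fun u => eq_sub_iff_add_eq.symm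
  let Φ : E → E := fun u => Function.surjInv hS (l - Q u)
  have hΦ : ∀ u, S (Φ u) = l - Q u := fun u => Function.surjInv_eq hS _
  have hmaps : Set.MapsTo Φ (Metric.closedBall 0 r) (Metric.closedBall 0 r) := by
    intro u hu
    rw [mem_closedBall_zero_iff] at hu ⊢
    have hQu : ‖Q u‖ ≤ k * ‖u‖ ^ 2 := by simpa [hQ0, sq, mul_assoc] using hQ u 0
    refine le_of_mul_le_mul_left ?_ hc
    calc c * ‖Φ u‖ ≤ ‖S (Φ u)‖ := hcS _
      _ ≤ ‖l‖ + k * ‖u‖ ^ 2 := by rw [hΦ]; exact (norm_sub_le _ _).trans (by gcongr)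
      _ ≤ ‖l‖ + k * r ^ 2 := by gcongr
      _ ≤ c * r := hrl
  have hcontr : ContractingWith (2 * k * r / c).toNNReal (hmaps.restrict Φ _ _) := by
    refine ⟨Real.toNNReal_lt_one.2 ((div_lt_one hc).2 hrc), LipschitzWith.of_dist_le' fun u v => ?_⟩
    have := mul_norm_sub_le_of_eq_sub hcS hk.le hQ (mem_closedBall_zero_iff.1 u.2)
      (mem_closedBall_zero_iff.1 v.2) (hΦ u) (hΦ v)
    simp only [Subtype.dist_eq, dist_eq_norm, Set.MapsTo.val_restrict_apply]
    rw [div_mul_eq_mul_div, le_div_iff₀ hc]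
    linarith
  obtain ⟨u, hu, hfix, -⟩ := hcontr.exists_fixedPoint' Metric.isClosed_closedBall.isComplete
    hmaps (Metric.mem_closedBall_self hr.le) (edist_ne_top _ _)
  have hueq : S u = l - Q u := (congrArg S hfix).symm.trans (hΦ u)
  refine ⟨r, hr, (lt_div_iff₀ (by positivity)).2 (by linarith), u,
    ⟨mem_closedBall_zero_iff.1 hu, (hsol u).2 hueq⟩, fun v ⟨hv, hvsol⟩ => ?_⟩
  have := mul_norm_sub_le_of_eq_sub hcS hk.le hQ hv (mem_closedBall_zero_iff.1 hu)
    ((hsol v).1 hvsol) hueq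
  have : ‖v - u‖ = 0 := by nlinarith [norm_nonneg (v - u)]
  exact sub_eq_zero.1 (norm_eq_zero.1 this)

end QuadraticPerturbation

theorem ContinuousLinearMap.norm_apply_self_sub_apply_self_le_s13 {𝕜 E F : Type*}
    [NontriviallyNormedField 𝕜] [SeminormedAddCommGroup E] [NormedSpace 𝕜 E]
    [SeminormedAddCommGroup F] [NormedSpace 𝕜 F] (A : E →L[𝕜] E →L[𝕜] F) (x y : E) :
    ‖A x x - A y y‖ ≤ ‖A‖ * (‖x‖ + ‖y‖) * ‖x - y‖ := by
  have hsplit : A x x - A y y = A x (x - y) + A (x - y) y := by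
    simp only [map_sub, sub_apply]; abel
  calc ‖A x x - A y y‖ ≤ ‖A x (x - y)‖ + ‖A (x - y) y‖ := hsplit ▸ norm_add_le _ _
    _ ≤ ‖A‖ * ‖x‖ * ‖x - y‖ + ‖A‖ * ‖x - y‖ * ‖y‖ :=
      add_le_add (A.le_opNorm₂ _ _) (A.le_opNorm₂ _ _)
    _ = ‖A‖ * (‖x‖ + ‖y‖) * ‖x - y‖ := by ring

theorem ContinuousLinearMap.surjective_of_bound_of_inner_pos
    {E : Type*} [NormedAddCommGroup E] [InnerProductSpace ℝ E] [CompleteSpace E]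
    (S : E →L[ℝ] E) {c : ℝ} (hc : 0 < c) (hS : ∀ x, c * ‖x‖ ≤ ‖S x‖)
    (hpos : ∀ x ≠ 0, 0 < ⟪S x, x⟫) : Function.Surjective S := by
  obtain ⟨K, hK⟩ := antilipschitzWith_iff_exists_mul_le_norm.2 ⟨c, hc, hS⟩
  have hclosed : IsClosed (LinearMap.range (S : E →ₗ[ℝ] E) : Set E) := by
    exact hK.isClosed_range S.uniformContinuous
  have hker : LinearMap.ker (S† : E →ₗ[ℝ] E) = ⊥ := by
    refine (Submodule.eq_bot_iff _).2 fun y hy => ?_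
    by_contra hy0
    refine (hpos y hy0).ne' ?_
    rw [← S.adjoint_inner_right, show (S†) y = 0 from hy, inner_zero_right]
  refine LinearMap.range_eq_top.1 ?_
  rw [← hclosed.submodule_topologicalClosure_eq, Submodule.topologicalClosure_eq_top_iff,
    S.orthogonal_range, hker]

section AdjointSandwich

variable {V H : Type*} [NormedAddCommGroup V] [InnerProductSpace ℝ V] [CompleteSpace V]
  [NormedAddCommGroup H] [InnerProductSpace ℝ H] [CompleteSpace H]

theorem ContinuousLinearMap.adjoint_apply_mem_orthogonal_ker (T : H →L[ℝ] V) (v : V) :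
    (T†) v ∈ (LinearMap.ker (T : H →ₗ[ℝ] V))ᗮ :=
  T.orthogonal_ker ▸ Submodule.le_topologicalClosure _ ⟨v, rfl⟩

theorem ContinuousLinearMap.inner_adjoint_comp_comp_self_pos (T : H →L[ℝ] V) {B : V →L[ℝ] V}
    {α : ℝ} (hα : 0 < α) (hB : ∀ v : V, α * ‖v‖ ^ 2 ≤ ⟪B v, v⟫) {x : H}
    (hx : x ∈ (LinearMap.ker (T : H →ₗ[ℝ] V))ᗮ) (hx0 : x ≠ 0) :
    0 < ⟪(T† ∘L B ∘L T) x, x⟫ := by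
  have hTx : T x ≠ 0 := fun h =>
    hx0 (Submodule.inf_orthogonal_eq_bot _ |>.le ⟨h, hx⟩ |> (Submodule.mem_bot ℝ).1)
  rw [comp_apply, comp_apply, adjoint_inner_left]
  exact lt_of_lt_of_le (by positivity) (hB (T x))

theorem ContinuousLinearMap.norm_adjoint_apply_sub_le (T : H →L[ℝ] V)
    (A : V →L[ℝ] V →L[ℝ] V) (x y : H) :
    ‖(T†) (A (T x) (T x)) - (T†) (A (T y) (T y))‖ ≤ ‖T‖ ^ 3 * ‖A‖ * (‖x‖ + ‖y‖) * ‖x - y‖ :=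
  calc ‖(T†) (A (T x) (T x)) - (T†) (A (T y) (T y))‖
      ≤ ‖T‖ * (‖A‖ * (‖T x‖ + ‖T y‖) * ‖T x - T y‖) := by
        rw [← map_sub, ← adjoint.norm_map T]
        exact (T†).le_opNorm_of_le (A.norm_apply_self_sub_apply_self_le_s13 _ _)
    _ ≤ ‖T‖ * (‖A‖ * (‖T‖ * ‖x‖ + ‖T‖ * ‖y‖) * (‖T‖ * ‖x - y‖)) := by
        rw [← map_sub]; gcongr <;> exact T.le_opNorm _
    _ = ‖T‖ ^ 3 * ‖A‖ * (‖x‖ + ‖y‖) * ‖x - y‖ := by ring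

end AdjointSandwich

theorem discrete_nonlinear_problem_unique_solution_general
    {V H : Type*} [NormedAddCommGroup V] [InnerProductSpace ℝ V] [CompleteSpace V]
    [NormedAddCommGroup H] [InnerProductSpace ℝ H] [CompleteSpace H]
    (B : V →L[ℝ] V) (α : ℝ) (hα : 0 < α)
    (hB : ∀ v : V, α * ‖v‖ ^ 2 ≤ ⟪B v, v⟫)
    (T : H →L[ℝ] V)
    (G : H →L[ℝ] H) (hG : G = (ContinuousLinearMap.adjoint T).comp (B.comp T))
    (c : ℝ) (hc : 0 < c) (hcG : ∀ x ∈ (LinearMap.ker (T : H →ₗ[ℝ] V))ᗮ, c * ‖x‖ ≤ ‖G x‖)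
    (A₁ : V →L[ℝ] V →L[ℝ] V)
    (G₁ : H → H) (hG₁ : ∀ x : H, G₁ x = ContinuousLinearMap.adjoint T (A₁ (T x) (T x)))
    (lbar : H) (hlbar : lbar ∈ LinearMap.range (ContinuousLinearMap.adjoint T : V →ₗ[ℝ] H))
    (hl : ‖lbar‖ < c ^ 2 / (4 * ‖T‖ ^ 3 * ‖A₁‖)) :
    ∃ rs : ℝ, 0 < rs ∧ rs < c / (2 * ‖T‖ ^ 3 * ‖A₁‖) ∧
      ∃! u : H, u ∈ (LinearMap.ker (T : H →ₗ[ℝ] V))ᗮ ∧ ‖u‖ ≤ rs ∧ G u + G₁ u = lbar := by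
  set K := (LinearMap.ker (T : H →ₗ[ℝ] V))ᗮ
  subst hG
  obtain ⟨w, rfl⟩ := hlbar
  let S : K →L[ℝ] K := (T† ∘L B ∘L T).restrict fun x _ => T.adjoint_apply_mem_orthogonal_ker _
  have hS : Function.Surjective S := S.surjective_of_bound_of_inner_pos hc (fun x => hcG x x.2)
    fun x hx => T.inner_adjoint_comp_comp_self_pos hα hB x.2 (by simpa using hx)
  let Q : K → K := fun u => ⟨G₁ u, hG₁ u ▸ T.adjoint_apply_mem_orthogonal_ker _⟩
  have hQ0 : Q 0 = 0 := by ext; simp [Q, hG₁]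
  have hQ (u v : K) : ‖Q u - Q v‖ ≤ ‖T‖ ^ 3 * ‖A₁‖ * (‖u‖ + ‖v‖) * ‖u - v‖ := by
    have := T.norm_adjoint_apply_sub_le A₁ u v
    rw [← hG₁, ← hG₁] at this
    exact this
  obtain ⟨r, hr, hrc, u, ⟨hur, hu⟩, huniq⟩ :=
    existsUnique_add_eq_of_quadratic (S : K →+ K) hS hc (fun x => hcG x x.2) Q hQ0 hQ
      ⟨_, T.adjoint_apply_mem_orthogonal_ker w⟩ (by rwa [mul_assoc] at hl)
  refine ⟨r, hr, by rwa [mul_assoc], u, ⟨u.2, hur, congrArg Subtype.val hu⟩,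
    fun v ⟨hvK, hvr, hv⟩ => congrArg Subtype.val (huniq ⟨v, hvK⟩ ⟨hvr, Subtype.ext hv⟩)⟩

/-- If `‖l̄‖ < c²/(4‖T‖³‖A₁‖)` then the discrete nonlinear problem
`G ū + G₁(ū) = l̄` has a unique solution in some ball `𝐁_{r*}` of `Ran G = (ker T)ᗮ`
with `0 < r* < c/(2‖T‖³‖A₁‖)`. -/
theorem discrete_nonlinear_problem_unique_solution
    {V H : Type*} [NormedAddCommGroup V] [InnerProductSpace ℝ V] [CompleteSpace V]
    [NormedAddCommGroup H] [InnerProductSpace ℝ H] [CompleteSpace H]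
    (B : V →L[ℝ] V) (α : ℝ) (hα : 0 < α)
    (hB : ∀ v : V, α * ‖v‖ ^ 2 ≤ ⟪B v, v⟫)
    (T : H →L[ℝ] V) (hT : Function.Surjective T)
    (G : H →L[ℝ] H) (hG : G = (ContinuousLinearMap.adjoint T).comp (B.comp T))
    (c : ℝ) (hc : 0 < c) (hcG : ∀ x ∈ (LinearMap.ker (T : H →ₗ[ℝ] V))ᗮ, c * ‖x‖ ≤ ‖G x‖)
    (A₁ : V →L[ℝ] V →L[ℝ] V) (hA₁ : ‖A₁‖ ≠ 0)
    (G₁ : H → H) (hG₁ : ∀ x : H, G₁ x = ContinuousLinearMap.adjoint T (A₁ (T x) (T x)))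
    (lbar : H) (hlbar : lbar ∈ LinearMap.range (ContinuousLinearMap.adjoint T : V →ₗ[ℝ] H))
    (hl : ‖lbar‖ < c ^ 2 / (4 * ‖T‖ ^ 3 * ‖A₁‖)) :
    ∃ rs : ℝ, 0 < rs ∧ rs < c / (2 * ‖T‖ ^ 3 * ‖A₁‖) ∧
      ∃! u : H, u ∈ (LinearMap.ker (T : H →ₗ[ℝ] V))ᗮ ∧ ‖u‖ ≤ rs ∧ G u + G₁ u = lbar :=
  discrete_nonlinear_problem_unique_solution_general B α hα hB T G hG c hc hcG A₁ G₁ hG₁ lbar hlbar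
    hl
end
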